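/- Let g_0 be a Riemannian metric on ℝ^4 and suppose that in coordinates z near the origin, g = [δ_{ij} − (1/3) R_{kijl} z^k z^l + t T_{kijl} z^k z^l / |z|^4 + O(|z|^3)] dz^i dz^j, where R has Riemann symmetries and T_{kijl} = (2/3)(R'_{kijl} + R'_{lijk}) for some tensor R' with Riemann symmetries. Then under the inversion y = z/|z|^2 and conformal rescaling by f^2 with f(z) = |z|^{-2}, the metric g̃ = f² g satisfies g̃ = [δ_{ij} − (1/3) R_{kijl} y^k y^l / |y|^4 + t T_{kijl} y^k y^l + O(|y|^{-3})] dy^i dy^j as |y| → ∞. -/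
import Mathlib


/-- A tensor with the algebraic symmetries of the Riemann curvature tensor. -/
def RiemSym (R : Fin 4 → Fin 4 → Fin 4 → Fin 4 → ℝ) : Prop :=
  (∀ k i j l, R k i j l = - R i k j l) ∧
  (∀ k i j l, R k i j l = - R k i l j) ∧
  (∀ k i j l, R k i j l = R j l k i) ∧
  (∀ k i j l, R k i j l + R i j k l + R j k i l = 0)

lemma antisym_sum' (f : Fin 4 → Fin 4 → ℝ) (h : ∀ a b, f a b = - f b a) :
    ∑ a, ∑ b, f a b = 0 := by
  have key : (∑ a, ∑ b, f a b) = - ∑ a, ∑ b, f a b := by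
    calc (∑ a, ∑ b, f a b) = ∑ b, ∑ a, f a b := Finset.sum_comm
      _ = ∑ b, ∑ a, -(f b a) := by
          exact Finset.sum_congr rfl fun b _ => Finset.sum_congr rfl fun a _ => h a b
      _ = - ∑ b, ∑ a, f b a := by simp
      _ = - ∑ a, ∑ b, f a b := rfl
  linarith

lemma contract_left (S : Fin 4 → Fin 4 → Fin 4 → Fin 4 → ℝ)
    (hS : ∀ k a b l, S k a b l = - S a k b l) (y : Fin 4 → ℝ) (b : Fin 4) :
    ∑ a, (∑ k, ∑ l, S k a b l * y k * y l) * y a = 0 := by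
  simp_rw [Finset.sum_mul]
  apply antisym_sum' (f := fun a k => ∑ l, S k a b l * y k * y l * y a)
  intro a k
  rw [← Finset.sum_neg_distrib]
  exact Finset.sum_congr rfl fun l _ => by rw [hS k a b l]; ring

lemma contract_right (S : Fin 4 → Fin 4 → Fin 4 → Fin 4 → ℝ)
    (hS : ∀ k i b l, S k i b l = - S k i l b) (y : Fin 4 → ℝ) (i : Fin 4) :
    ∑ b, (∑ k, ∑ l, S k i b l * y k * y l) * y b = 0 := by
  simp_rw [Finset.sum_mul]
  rw [Finset.sum_comm]
  apply Finset.sum_eq_zero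
  intro k _
  apply antisym_sum' (f := fun b l => S k i b l * y k * y l * y b)
  intro b l
  rw [hS k i b l]; ring

lemma matrix_contract (A : Fin 4 → Fin 4 → ℝ) (y : Fin 4 → ℝ) (s : ℝ)
    (hA1 : ∀ b, ∑ a, A a b * y a = 0) (hA2 : ∀ a, ∑ b, A a b * y b = 0) (i j : Fin 4) :
    ∑ a, ∑ b, A a b * ((if a = i then (1:ℝ) else 0) - 2 * y a * y i / s)
        * ((if b = j then (1:ℝ) else 0) - 2 * y b * y j / s) = A i j := by
  have expand : ∀ a b : Fin 4, A a b * ((if a = i then (1:ℝ) else 0) - 2 * y a * y i / s)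
        * ((if b = j then (1:ℝ) else 0) - 2 * y b * y j / s)
      = (if a = i then (1:ℝ) else 0) * ((if b = j then (1:ℝ) else 0) * A a b)
        - (if a = i then (1:ℝ) else 0) * (2 * y j / s * (A a b * y b))
        - (if b = j then (1:ℝ) else 0) * (2 * y i / s * (A a b * y a))
        + (2 * y i / s) * (2 * y j / s) * (y a * (A a b * y b)) := by
    intro a b; ring
  simp_rw [expand]
  simp_rw [Finset.sum_add_distrib, Finset.sum_sub_distrib]
  simp_rw [← Finset.mul_sum]
  simp only [hA2, mul_zero, Finset.sum_const_zero, sub_zero, add_zero, ite_mul, one_mul, zero_mul,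
    Finset.sum_ite_eq', Finset.mem_univ, if_true]
  simp only [← Finset.mul_sum, hA1, mul_zero, sub_zero]

lemma delta_contract (y : Fin 4 → ℝ) (s : ℝ) (hs : s = ∑ m, y m ^ 2) (h0 : s ≠ 0) (i j : Fin 4) :
    ∑ a, ∑ b, (if a = b then (1:ℝ) else 0) * ((if a = i then (1:ℝ) else 0) - 2 * y a * y i / s)
        * ((if b = j then (1:ℝ) else 0) - 2 * y b * y j / s) = if i = j then 1 else 0 := by
  have step1 : ∀ a : Fin 4, ∑ b, (if a = b then (1:ℝ) else 0) * ((if a = i then (1:ℝ) else 0) - 2 * y a * y i / s)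
        * ((if b = j then (1:ℝ) else 0) - 2 * y b * y j / s)
      = ((if a = i then (1:ℝ) else 0) - 2 * y a * y i / s) * ((if a = j then (1:ℝ) else 0) - 2 * y a * y j / s) := by
    intro a
    simp only [ite_mul, one_mul, zero_mul, Finset.sum_ite_eq, Finset.mem_univ, if_true]
  simp only [step1]
  have expand : ∀ a : Fin 4, ((if a = i then (1:ℝ) else 0) - 2 * y a * y i / s) * ((if a = j then (1:ℝ) else 0) - 2 * y a * y j / s)
      = (if a = i then (1:ℝ) else 0) * (if a = j then (1:ℝ) else 0)
        - (if a = i then (1:ℝ) else 0) * (2 * y j / s * y a)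
        - (if a = j then (1:ℝ) else 0) * (2 * y i / s * y a)
        + (2 * y i / s) * (2 * y j / s) * (y a ^ 2) := by
    intro a; ring
  simp only [expand, Finset.sum_add_distrib, Finset.sum_sub_distrib, ← Finset.mul_sum,
    ite_mul, one_mul, zero_mul, Finset.sum_ite_eq', Finset.mem_univ, if_true, ← hs]
  field_simp
  split_ifs <;> ring

lemma T_reduce (T R' : Fin 4 → Fin 4 → Fin 4 → Fin 4 → ℝ)
    (hT : ∀ k i j l, T k i j l = (2/3 : ℝ) * (R' k i j l + R' l i j k))
    (y : Fin 4 → ℝ) (a b : Fin 4) :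
    ∑ k, ∑ l, T k a b l * y k * y l = (4/3 : ℝ) * ∑ k, ∑ l, R' k a b l * y k * y l := by
  have swap : (∑ k, ∑ l, R' l a b k * y k * y l) = ∑ k, ∑ l, R' k a b l * y k * y l := by
    rw [Finset.sum_comm]
    exact Finset.sum_congr rfl fun k _ => Finset.sum_congr rfl fun l _ => by ring
  have e : ∀ k l : Fin 4, T k a b l * y k * y l
      = (2/3 : ℝ) * (R' k a b l * y k * y l) + (2/3 : ℝ) * (R' l a b k * y k * y l) := by
    intro k l; rw [hT]; ring
  simp only [e, Finset.sum_add_distrib, ← Finset.mul_sum, swap]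
  ring


/-- Expansion of the inverted metric: if `g = [δ_{ij} − (1/3)R_{kijl}zᵏzˡ
+ t T_{kijl}zᵏzˡ/|z|⁴ + O(|z|³)] dzⁱdzʲ` near `0`, with `R` Riemann-symmetric and
`T_{kijl} = (2/3)(R'_{kijl} + R'_{lijk})`, then the conformally inverted metric
`g̃ = f²g` in coordinates `y = z/|z|²` satisfies
`g̃ = [δ_{ij} − (1/3)R_{kijl}yᵏyˡ/|y|⁴ + t T_{kijl}yᵏyˡ + O(|y|⁻³)] dyⁱdyʲ` at infinity. -/
theorem stmt_17 (g : (Fin 4 → ℝ) → Fin 4 → Fin 4 → ℝ)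
    (R T R' : Fin 4 → Fin 4 → Fin 4 → Fin 4 → ℝ) (t : ℝ)
    (hR : RiemSym R) (hR' : RiemSym R')
    (hT : ∀ k i j l, T k i j l = (2/3 : ℝ) * (R' k i j l + R' l i j k))
    (hg : ∃ C > (0:ℝ), ∃ ε > (0:ℝ), ∀ z : Fin 4 → ℝ, z ≠ 0 → ‖z‖ ≤ ε → ∀ i j,
      |g z i j - ((if i = j then (1:ℝ) else 0)
          - (1/3 : ℝ) * ∑ k, ∑ l, R k i j l * z k * z l
          + t * (∑ k, ∑ l, T k i j l * z k * z l) / (∑ m, z m ^ 2) ^ 2)|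
        ≤ C * ‖z‖ ^ 3) :
    ∃ C > (0:ℝ), ∃ R₀ > (0:ℝ), ∀ y : Fin 4 → ℝ, R₀ ≤ ‖y‖ → ∀ i j,
      |(∑ α, ∑ β, g ((∑ m, y m ^ 2)⁻¹ • y) α β
            * ((if α = i then (1:ℝ) else 0) - 2 * y α * y i / (∑ m, y m ^ 2))
            * ((if β = j then (1:ℝ) else 0) - 2 * y β * y j / (∑ m, y m ^ 2)))
          - ((if i = j then (1:ℝ) else 0)
            - (1/3 : ℝ) * (∑ k, ∑ l, R k i j l * y k * y l) / (∑ m, y m ^ 2) ^ 2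
            + t * ∑ k, ∑ l, T k i j l * y k * y l)|
        ≤ C * (‖y‖ ^ 3)⁻¹ := by
  obtain ⟨C, hC, ε, hε, hg⟩ := hg
  refine ⟨144 * C + 1, by positivity, max 1 ε⁻¹, lt_of_lt_of_le one_pos (le_max_left _ _), ?_⟩
  intro y hy i j
  have hy1 : (1:ℝ) ≤ ‖y‖ := le_trans (le_max_left _ _) hy
  have hyε : ε⁻¹ ≤ ‖y‖ := le_trans (le_max_right _ _) hy
  have hy_pos : (0:ℝ) < ‖y‖ := lt_of_lt_of_le one_pos hy1
  have hy0 : y ≠ 0 := norm_pos_iff.mp hy_pos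
  set s := ∑ m, y m ^ 2 with hs_def
  have hs_pos : 0 < s := by
    obtain ⟨m, hm⟩ := Function.ne_iff.mp hy0
    exact Finset.sum_pos' (fun m _ => sq_nonneg _) ⟨m, Finset.mem_univ m, sq_pos_of_ne_zero hm⟩
  have hs0 : s ≠ 0 := ne_of_gt hs_pos
  have hnorm_sq : ‖y‖ ^ 2 ≤ s := by
    have h1 : ‖y‖ ≤ Real.sqrt s := by
      rw [pi_norm_le_iff_of_nonneg (Real.sqrt_nonneg _)]
      intro m
      rw [Real.norm_eq_abs, ← Real.sqrt_sq_eq_abs]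
      apply Real.sqrt_le_sqrt
      rw [hs_def]
      exact Finset.single_le_sum (fun m _ => sq_nonneg (y m)) (Finset.mem_univ m)
    calc ‖y‖ ^ 2 ≤ (Real.sqrt s) ^ 2 := by gcongr
      _ = s := Real.sq_sqrt hs_pos.le
  set z : Fin 4 → ℝ := s⁻¹ • y with hz_def
  have hz_norm : ‖z‖ = s⁻¹ * ‖y‖ := by
    rw [hz_def, norm_smul, Real.norm_eq_abs, abs_of_pos (by positivity)]
  have hz_le : ‖z‖ ≤ ‖y‖⁻¹ := by
    rw [hz_norm, ← div_eq_inv_mul, div_le_iff₀ hs_pos]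
    calc ‖y‖ = ‖y‖⁻¹ * ‖y‖ ^ 2 := by field_simp
      _ ≤ ‖y‖⁻¹ * s := by gcongr
  have hz_eps : ‖z‖ ≤ ε := by
    refine hz_le.trans ?_
    have := inv_anti₀ (inv_pos.mpr hε) hyε
    rwa [inv_inv] at this
  have hz0 : z ≠ 0 := by
    rw [hz_def]
    exact smul_ne_zero (inv_ne_zero hs0) hy0
  have hz_coord : ∀ k, z k = s⁻¹ * y k := by
    intro k; rw [hz_def]; simp
  have hz_sum : ∑ m, z m ^ 2 = s⁻¹ := by
    simp_rw [hz_coord, mul_pow, ← Finset.mul_sum, ← hs_def]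
    field_simp
  set A : Fin 4 → Fin 4 → ℝ := fun a b =>
    -(1/3 : ℝ) * s⁻¹ ^ 2 * (∑ k, ∑ l, R k a b l * y k * y l)
      + (4/3 * t) * (∑ k, ∑ l, R' k a b l * y k * y l) with hA_def
  have hA1 : ∀ b, ∑ a, A a b * y a = 0 := by
    intro b
    have e : ∀ a, A a b * y a
        = -(1/3 : ℝ) * s⁻¹ ^ 2 * ((∑ k, ∑ l, R k a b l * y k * y l) * y a)
          + (4/3 * t) * ((∑ k, ∑ l, R' k a b l * y k * y l) * y a) := by
      intro a; rw [hA_def]; ring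
    simp only [e, Finset.sum_add_distrib, ← Finset.mul_sum,
      contract_left R hR.1 y b, contract_left R' hR'.1 y b, mul_zero, add_zero]
  have hA2 : ∀ a, ∑ b, A a b * y b = 0 := by
    intro a
    have e : ∀ b, A a b * y b
        = -(1/3 : ℝ) * s⁻¹ ^ 2 * ((∑ k, ∑ l, R k a b l * y k * y l) * y b)
          + (4/3 * t) * ((∑ k, ∑ l, R' k a b l * y k * y l) * y b) := by
      intro b; rw [hA_def]; ring
    simp only [e, Finset.sum_add_distrib, ← Finset.mul_sum,
      contract_right R hR.2.1 y a, contract_right R' hR'.2.1 y a, mul_zero, add_zero]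
  have hM : ∀ a b : Fin 4, ((if a = b then (1:ℝ) else 0)
        - (1/3 : ℝ) * ∑ k, ∑ l, R k a b l * z k * z l
        + t * (∑ k, ∑ l, T k a b l * z k * z l) / (∑ m, z m ^ 2) ^ 2)
      = (if a = b then (1:ℝ) else 0) + A a b := by
    intro a b
    have hRz : ∑ k, ∑ l, R k a b l * z k * z l
        = s⁻¹ ^ 2 * ∑ k, ∑ l, R k a b l * y k * y l := by
      simp_rw [hz_coord, Finset.mul_sum]
      exact Finset.sum_congr rfl fun k _ => Finset.sum_congr rfl fun l _ => by ring
    have hTz : ∑ k, ∑ l, T k a b l * z k * z l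
        = s⁻¹ ^ 2 * ∑ k, ∑ l, T k a b l * y k * y l := by
      simp_rw [hz_coord, Finset.mul_sum]
      exact Finset.sum_congr rfl fun k _ => Finset.sum_congr rfl fun l _ => by ring
    rw [hRz, hTz, hz_sum, T_reduce T R' hT y a b, hA_def]
    split_ifs <;> (field_simp; ring)
  have hMPP : ∑ a, ∑ b, ((if a = b then (1:ℝ) else 0) + A a b)
        * ((if a = i then (1:ℝ) else 0) - 2 * y a * y i / s)
        * ((if b = j then (1:ℝ) else 0) - 2 * y b * y j / s)
      = ((if i = j then (1:ℝ) else 0)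
          - (1/3 : ℝ) * (∑ k, ∑ l, R k i j l * y k * y l) / s ^ 2
          + t * ∑ k, ∑ l, T k i j l * y k * y l) := by
    have split : ∀ a b : Fin 4, ((if a = b then (1:ℝ) else 0) + A a b)
          * ((if a = i then (1:ℝ) else 0) - 2 * y a * y i / s)
          * ((if b = j then (1:ℝ) else 0) - 2 * y b * y j / s)
        = (if a = b then (1:ℝ) else 0) * ((if a = i then (1:ℝ) else 0) - 2 * y a * y i / s)
            * ((if b = j then (1:ℝ) else 0) - 2 * y b * y j / s)
          + A a b * ((if a = i then (1:ℝ) else 0) - 2 * y a * y i / s)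
            * ((if b = j then (1:ℝ) else 0) - 2 * y b * y j / s) := by
      intro a b; ring
    simp only [split, Finset.sum_add_distrib]
    rw [delta_contract y s hs_def hs0 i j, matrix_contract A y s hA1 hA2 i j,
      T_reduce T R' hT y i j, hA_def]
    split_ifs <;> (field_simp; ring)
  have goal_eq : (∑ α, ∑ β, g z α β
        * ((if α = i then (1:ℝ) else 0) - 2 * y α * y i / s)
        * ((if β = j then (1:ℝ) else 0) - 2 * y β * y j / s))
      - ((if i = j then (1:ℝ) else 0)
          - (1/3 : ℝ) * (∑ k, ∑ l, R k i j l * y k * y l) / s ^ 2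
          + t * ∑ k, ∑ l, T k i j l * y k * y l)
      = ∑ α, ∑ β, (g z α β - ((if α = β then (1:ℝ) else 0) + A α β))
        * ((if α = i then (1:ℝ) else 0) - 2 * y α * y i / s)
        * ((if β = j then (1:ℝ) else 0) - 2 * y β * y j / s) := by
    simp only [sub_mul, Finset.sum_sub_distrib, hMPP]
  rw [goal_eq]
  have hEbound : ∀ a b : Fin 4, |g z a b - ((if a = b then (1:ℝ) else 0) + A a b)| ≤ C * ‖z‖ ^ 3 := by
    intro a b; rw [← hM a b]; exact hg z hz0 hz_eps a b
  have hP : ∀ (a c : Fin 4), |(if a = c then (1:ℝ) else 0) - 2 * y a * y c / s| ≤ 3 := by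
    intro a c
    have ha : |y a| ≤ ‖y‖ := by
      have := norm_le_pi_norm y a; rwa [Real.norm_eq_abs] at this
    have hc : |y c| ≤ ‖y‖ := by
      have := norm_le_pi_norm y c; rwa [Real.norm_eq_abs] at this
    have h2 : |2 * y a * y c / s| ≤ 2 := by
      rw [abs_div, abs_of_pos hs_pos, div_le_iff₀ hs_pos]
      calc |2 * y a * y c| = 2 * (|y a| * |y c|) := by
            rw [abs_mul, abs_mul, abs_two]; ring
        _ ≤ 2 * (‖y‖ * ‖y‖) := by gcongr
        _ = 2 * ‖y‖ ^ 2 := by ring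
        _ ≤ 2 * s := by linarith
    have h1 : |(if a = c then (1:ℝ) else 0)| ≤ 1 := by split_ifs <;> simp
    calc |(if a = c then (1:ℝ) else 0) - 2 * y a * y c / s|
        ≤ |(if a = c then (1:ℝ) else 0)| + |2 * y a * y c / s| := abs_sub _ _
      _ ≤ 1 + 2 := add_le_add h1 h2
      _ = 3 := by norm_num
  have hCz : (0:ℝ) ≤ C * ‖z‖ ^ 3 := by positivity
  calc |∑ α, ∑ β, (g z α β - ((if α = β then (1:ℝ) else 0) + A α β))
        * ((if α = i then (1:ℝ) else 0) - 2 * y α * y i / s)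
        * ((if β = j then (1:ℝ) else 0) - 2 * y β * y j / s)|
      ≤ ∑ α, ∑ β, |(g z α β - ((if α = β then (1:ℝ) else 0) + A α β))
        * ((if α = i then (1:ℝ) else 0) - 2 * y α * y i / s)
        * ((if β = j then (1:ℝ) else 0) - 2 * y β * y j / s)| :=
        (Finset.abs_sum_le_sum_abs _ _).trans
          (Finset.sum_le_sum fun a _ => Finset.abs_sum_le_sum_abs _ _)
    _ ≤ ∑ _α : Fin 4, ∑ _β : Fin 4, (C * ‖z‖ ^ 3) * 3 * 3 := by
        refine Finset.sum_le_sum fun a _ => Finset.sum_le_sum fun b _ => ?_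
        rw [abs_mul, abs_mul]
        exact mul_le_mul (mul_le_mul (hEbound a b) (hP a i) (abs_nonneg _)
          hCz) (hP b j) (abs_nonneg _) (by positivity)
    _ = 144 * (C * ‖z‖ ^ 3) := by
        simp [Finset.sum_const, Finset.card_univ]; ring
    _ ≤ (144 * C + 1) * (‖y‖ ^ 3)⁻¹ := by
        have h3 : ‖z‖ ^ 3 ≤ (‖y‖ ^ 3)⁻¹ := by
          rw [← inv_pow]
          exact pow_le_pow_left₀ (norm_nonneg _) hz_le 3
        have hinv : (0:ℝ) ≤ (‖y‖ ^ 3)⁻¹ := by positivity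
        have h4 : (144 * C) * ‖z‖ ^ 3 ≤ (144 * C) * (‖y‖ ^ 3)⁻¹ :=
          mul_le_mul_of_nonneg_left h3 (by positivity)
        linarith
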